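/- arXiv:1408.5763 — 2 statements merged into one kernel-verified Lean document; each statement's English description precedes it below -/
import Mathlib

section
/- Let X be a compact metric space and f₁,…,f_k homeomorphisms of X such that X is chain transitive for the generated IFS, and let ℙ be the Bernoulli measure on Σ = {1,…,k}^ℕ with strictly positive weights. Then for every x ∈ X there is Ω(x) ⊆ Σ with ℙ(Ω(x)) = 1 such that for every ω ∈ Ω(x), every y ∈ X, and every δ > 0, there is a δ-chain in direction of ω from x to y (i.e., points x = x₀,…,xₙ = y with d(x_{i+1}, f_{ω_{i+1}}(x_i)) < δ). -/
open MeasureTheory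
open scoped ENNReal

/-- `isChain f δ ω x y`: there is a δ-chain from `x` to `y` in direction of `ω`. -/
def isChain {X : Type*} [MetricSpace X] {k : ℕ} (f : Fin k → X → X) (δ : ℝ)
    (ω : ℕ → Fin k) (x y : X) : Prop :=
  ∃ n : ℕ, 1 ≤ n ∧ ∃ c : ℕ → X, c 0 = x ∧ c n = y ∧
    ∀ i < n, dist (c (i + 1)) (f (ω i) (c i)) < δ

/-! By compactness, finitely many chain words, all of length at most `N`, take every point
of `X` to `y` within `δ`. At each time `j N` the Bernoulli sequence spells the word chosen for
its current orbit point with probability at least `β = (min pᵢ) ^ N`, whatever happened before,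
so the probability of missing all of these chances is `0`. Following the orbit exactly until a
success and then the chosen word is a `δ`-chain. Countably many targets `y` (a dense set) and
`δ = 1 / (m + 1)` give the full-measure set. -/

open Set Filter Topology

section Orbit

variable {X : Type*} {k : ℕ} (f : Fin k → X → X)

def ifsOrbit (x : X) (ω : ℕ → Fin k) : ℕ → X
  | 0 => x
  | m + 1 => f (ω m) (ifsOrbit x ω m)

theorem dependsOn_ifsOrbit (x : X) (m : ℕ) :
    DependsOn (fun ω => ifsOrbit f x ω m) (Iio m) := by
  intro ω ω' h
  induction m with
  | zero => rfl
  | succ m ih =>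
    simp only [ifsOrbit, h m (Nat.lt_succ_self m),
      ih fun i hi => h i (Nat.lt_succ_of_lt hi)]

end Orbit

section Chains

variable {X : Type*} [MetricSpace X] {k : ℕ} (f : Fin k → X → X)

def IsChainOfLength (δ : ℝ) (ω : ℕ → Fin k) (n : ℕ) (x y : X) : Prop :=
  ∃ c : ℕ → X, c 0 = x ∧ c n = y ∧ ∀ i < n, dist (c (i + 1)) (f (ω i) (c i)) < δ

variable {f} {δ : ℝ} {ω ω' : ℕ → Fin k} {m n : ℕ} {x y z : X}

theorem IsChainOfLength.congr_dir (h : IsChainOfLength f δ ω n x y)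
    (hω : ∀ i < n, ω i = ω' i) : IsChainOfLength f δ ω' n x y := by
  obtain ⟨c, hc0, hcn, hc⟩ := h
  exact ⟨c, hc0, hcn, fun i hi => hω i hi ▸ hc i hi⟩

theorem isChainOfLength_ifsOrbit (hδ : 0 < δ) (x : X) (ω : ℕ → Fin k) (m : ℕ) :
    IsChainOfLength f δ ω m x (ifsOrbit f x ω m) :=
  ⟨ifsOrbit f x ω, rfl, rfl, fun i _ => by simpa [ifsOrbit] using hδ⟩

theorem IsChainOfLength.append (h₁ : IsChainOfLength f δ ω m x z)
    (h₂ : IsChainOfLength f δ (fun i => ω (m + i)) n z y) :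
    IsChainOfLength f δ ω (m + n) x y := by
  obtain ⟨c₁, hc₁0, hc₁m, hc₁⟩ := h₁
  obtain ⟨c₂, hc₂0, hc₂n, hc₂⟩ := h₂
  set c : ℕ → X := fun i => if i < m then c₁ i else c₂ (i - m)
  have hc_le : ∀ i ≤ m, c i = c₁ i := by
    intro i hi
    rcases hi.lt_or_eq with hi | rfl
    · exact if_pos hi
    · simp [c, hc₁m, hc₂0]
  have hc_add : ∀ j, c (m + j) = c₂ j := fun j => by simp [c]
  refine ⟨c, (hc_le 0 (Nat.zero_le m)).trans hc₁0, (hc_add n).trans hc₂n, fun i hi => ?_⟩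
  rcases lt_or_ge i m with him | him
  · rw [hc_le i him.le, hc_le (i + 1) him]
    exact hc₁ i him
  · obtain ⟨j, rfl⟩ := Nat.exists_eq_add_of_le him
    rw [add_assoc, hc_add, hc_add]
    exact hc₂ j (by omega)

/-- The first step of a chain is an open condition on its starting point. -/
theorem IsChainOfLength.eventually_nhds (hf : Continuous (f (ω 0))) (hn : 1 ≤ n)
    (h : IsChainOfLength f δ ω n x y) : ∀ᶠ x' in 𝓝 x, IsChainOfLength f δ ω n x' y := by
  obtain ⟨c, rfl, rfl, hc⟩ := h
  have hopen : IsOpen {x' | dist (c 1) (f (ω 0) x') < δ} :=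
    isOpen_lt (continuous_const.dist hf) continuous_const
  filter_upwards [hopen.mem_nhds (hc 0 hn)] with x' hx'
  refine ⟨Function.update c 0 x', Function.update_self .., Function.update_of_ne (by omega) ..,
    ?_⟩
  intro i hi
  rcases Nat.eq_zero_or_pos i with rfl | hi0
  · simpa using hx'
  · rw [Function.update_of_ne (by omega), Function.update_of_ne hi0.ne']
    exact hc i hi

theorem exists_bound_isChainOfLength [CompactSpace X] (hf : ∀ i, Continuous (f i))
    (hch : ∀ p, ∃ ω, isChain f δ ω p y) :
    ∃ N, ∀ p, ∃ ω n, 1 ≤ n ∧ n ≤ N ∧ IsChainOfLength f δ ω n p y := by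
  choose ω n hn hc using hch
  obtain ⟨t, ht⟩ := isCompact_univ.elim_nhds_subcover
    (fun p => {p' | IsChainOfLength f δ (ω p) (n p) p' y})
    (fun p _ => IsChainOfLength.eventually_nhds (hf _) (hn p) (hc p))
  refine ⟨t.sup n, fun p => ?_⟩
  obtain ⟨q, hq, hpq⟩ := mem_iUnion₂.1 (ht.2 (mem_univ p))
  exact ⟨ω q, n q, hn q, Finset.le_sup hq, hpq⟩

theorem isChain_of_add_dist_le {ε : ℝ} {y' : X} (h : isChain f ε ω x y')
    (hδ : ε + dist y y' ≤ δ) : isChain f δ ω x y := by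
  obtain ⟨n, hn, c, hc0, hcn, hc⟩ := h
  refine ⟨n, hn, Function.update c n y, ?_, Function.update_self .., fun i hi => ?_⟩
  · rwa [Function.update_of_ne (by omega)]
  rw [Function.update_of_ne (show i ≠ n by omega)]
  by_cases hlast : i + 1 = n
  · rw [hlast, Function.update_self]
    have := hc i hi
    rw [hlast, hcn] at this
    linarith [dist_triangle y y' (f (ω i) (c i))]
  · rw [Function.update_of_ne hlast]
    linarith [hc i hi, dist_nonneg (x := y) (y := y')]

end Chains

section Bernoulli

variable {k : ℕ}

def prefixCylinder {m : ℕ} (v : Fin m → Fin k) : Set (ℕ → Fin k) :=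
  {ω | ∀ i : Fin m, ω i = v i}

def IsBernoulli (μ : Measure (ℕ → Fin k)) (pw : Fin k → ℝ≥0∞) : Prop :=
  ∀ (n : ℕ) (w : Fin n → Fin k), μ (prefixCylinder w) = ∏ i, pw (w i)

theorem measurableSet_prefixCylinder {m : ℕ} (v : Fin m → Fin k) :
    MeasurableSet (prefixCylinder v) := by
  simp only [prefixCylinder, ofPred_forall]
  exact .iInter fun i => measurableSet_eq_fun (measurable_pi_apply _) measurable_const

theorem disjoint_prefixCylinder {m : ℕ} {v v' : Fin m → Fin k} (h : v ≠ v') :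
    Disjoint (prefixCylinder v) (prefixCylinder v') :=
  disjoint_left.2 fun _ hv hv' => h (funext fun i => (hv i).symm.trans (hv' i))

theorem mem_prefixCylinder_append {m n : ℕ} {v : Fin m → Fin k} {w : Fin n → Fin k}
    {ω : ℕ → Fin k} :
    ω ∈ prefixCylinder (Fin.append v w) ↔
      ω ∈ prefixCylinder v ∧ ∀ i : Fin n, ω (m + i) = w i := by
  simp [prefixCylinder, Fin.forall_fin_add]

theorem prefixCylinder_nonempty [Nonempty (Fin k)] {m : ℕ} (v : Fin m → Fin k) :
    (prefixCylinder v).Nonempty := by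
  inhabit Fin k
  exact ⟨fun i => if h : i < m then v ⟨i, h⟩ else default, fun i => dif_pos i.2⟩

theorem DependsOn.eq_of_mem_prefixCylinder {β : Type*} {g : (ℕ → Fin k) → β} {m : ℕ}
    (hg : DependsOn g (Iio m)) {v : Fin m → Fin k} {ω ω' : ℕ → Fin k}
    (hω : ω ∈ prefixCylinder v) (hω' : ω' ∈ prefixCylinder v) : g ω = g ω' :=
  hg fun i hi => (hω ⟨i, hi⟩).trans (hω' ⟨i, hi⟩).symm

variable {μ : Measure (ℕ → Fin k)} {pw : Fin k → ℝ≥0∞}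

namespace IsBernoulli

theorem weight_le_one (hμ : IsBernoulli μ pw) [IsProbabilityMeasure μ] (i : Fin k) :
    pw i ≤ 1 := by
  simpa using (hμ 1 fun _ => i).symm.trans_le prob_le_one

theorem measure_prefixCylinder_append (hμ : IsBernoulli μ pw) {m n : ℕ}
    (v : Fin m → Fin k) (w : Fin n → Fin k) :
    μ (prefixCylinder (Fin.append v w)) = μ (prefixCylinder v) * ∏ i, pw (w i) := by
  simp [hμ _ (Fin.append v w), hμ m v, Fin.prod_univ_add]

theorem measure_prefixCylinder_diff_le (hμ : IsBernoulli μ pw) [IsFiniteMeasure μ]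
    {β : ℝ≥0∞} {m n : ℕ}
    {v : Fin m → Fin k} {w : Fin n → Fin k} {S : Set (ℕ → Fin k)}
    (hw : β ≤ ∏ i, pw (w i)) (hS : prefixCylinder (Fin.append v w) ⊆ S) :
    μ (prefixCylinder v \ S) ≤ (1 - β) * μ (prefixCylinder v) :=
  calc μ (prefixCylinder v \ S)
      ≤ μ (prefixCylinder v \ prefixCylinder (Fin.append v w)) :=
        measure_mono (sdiff_subset_sdiff_right hS)
    _ = μ (prefixCylinder v) - μ (prefixCylinder v) * ∏ i, pw (w i) := by
        rw [measure_sdiff (fun _ h => (mem_prefixCylinder_append.1 h).1)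
          (measurableSet_prefixCylinder _).nullMeasurableSet (measure_ne_top _ _),
          hμ.measure_prefixCylinder_append]
    _ ≤ μ (prefixCylinder v) - μ (prefixCylinder v) * β := by gcongr
    _ = (1 - β) * μ (prefixCylinder v) := by
        rw [ENNReal.sub_mul fun _ _ => measure_ne_top _ _, one_mul, mul_comm]

theorem measure_diff_le (hμ : IsBernoulli μ pw) [IsFiniteMeasure μ] {β : ℝ≥0∞} {m : ℕ}
    {B S : Set (ℕ → Fin k)}
    (hB : DependsOn (· ∈ B) (Iio m))
    (hS : ∀ v : Fin m → Fin k, ∃ n, ∃ w : Fin n → Fin k,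
      β ≤ ∏ i, pw (w i) ∧ prefixCylinder (Fin.append v w) ⊆ S) :
    μ (B \ S) ≤ (1 - β) * μ B := by
  classical
  choose n w hw hwS using hS
  set V := Finset.univ.filter fun v : Fin m → Fin k => prefixCylinder v ⊆ B
  have hBV : B = ⋃ v ∈ V, prefixCylinder v := by
    refine Subset.antisymm (fun ω hω => mem_iUnion₂.2 ⟨fun i => ω i, ?_, fun _ => rfl⟩)
      (iUnion₂_subset fun v hv => (Finset.mem_filter.1 hv).2)
    simp only [V, Finset.mem_filter, Finset.mem_univ, true_and]
    exact fun ω' hω' => (hB fun i hi => (hω' ⟨i, hi⟩).symm).mp hω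
  have hμB : μ B = ∑ v ∈ V, μ (prefixCylinder v) := by
    rw [hBV]
    exact measure_biUnion_finset (fun v _ v' _ h => disjoint_prefixCylinder h)
      fun v _ => measurableSet_prefixCylinder v
  calc μ (B \ S) ≤ μ (⋃ v ∈ V, prefixCylinder v \ S) := by
        rw [hBV]
        simp only [iUnion_sdiff, le_refl]
    _ ≤ ∑ v ∈ V, μ (prefixCylinder v \ S) := measure_biUnion_finset_le _ _
    _ ≤ ∑ v ∈ V, (1 - β) * μ (prefixCylinder v) :=
        Finset.sum_le_sum fun v _ => hμ.measure_prefixCylinder_diff_le (hw v) (hwS v)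
    _ = (1 - β) * μ B := by rw [hμB, Finset.mul_sum]

/-- The probability of missing `S 0, …, S (J - 1)` is at most `(1 - β) ^ J`. -/
theorem ae_exists_mem (hμ : IsBernoulli μ pw) [IsProbabilityMeasure μ] {β : ℝ≥0∞}
    (hβ : β ≠ 0) {N : ℕ} (S : ℕ → Set (ℕ → Fin k))
    (hSdep : ∀ j, DependsOn (· ∈ S j) (Iio (j * N + N)))
    (hSext : ∀ j, ∀ v : Fin (j * N) → Fin k, ∃ n, ∃ w : Fin n → Fin k,
      β ≤ ∏ i, pw (w i) ∧ prefixCylinder (Fin.append v w) ⊆ S j) :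
    ∀ᵐ ω ∂μ, ∃ j, ω ∈ S j := by
  set F : ℕ → Set (ℕ → Fin k) := fun J => {ω | ∀ j < J, ω ∉ S j}
  have hFdep : ∀ J, DependsOn (· ∈ F J) (Iio (J * N)) := by
    intro J ω ω' h
    refine propext (forall₂_congr fun j hj => ?_)
    have hjN : j * N + N ≤ J * N := by nlinarith
    exact not_congr (iff_of_eq (hSdep j fun i hi => h i (lt_of_lt_of_le hi hjN)))
  have hFsucc : ∀ J, F (J + 1) = F J \ S J := by
    intro J
    ext ω
    simp [F, Nat.le_iff_lt_or_eq, or_imp, forall_and]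
  have hF : ∀ J, μ (F J) ≤ (1 - β) ^ J := by
    intro J
    induction J with
    | zero => simp [F]
    | succ J ih =>
      rw [hFsucc, pow_succ']
      exact (hμ.measure_diff_le (hFdep J) (hSext J)).trans (by gcongr)
  have hlim := ENNReal.tendsto_pow_atTop_nhds_zero_of_lt_one
    (ENNReal.sub_lt_self ENNReal.one_ne_top one_ne_zero hβ)
  refine ae_iff.2 (nonpos_iff_eq_zero.1 (ge_of_tendsto' hlim fun J => ?_))
  exact (measure_mono (s := {ω | ¬∃ j, ω ∈ S j}) (t := F J)
    fun ω hω j _ hj => hω ⟨j, hj⟩).trans (hF J)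

/-- A rule that reads the first `m` letters and proposes a word of bounded length, to be
spelled from time `m` on, is almost surely obeyed at some time `m`. -/
theorem ae_exists_follows (hμ : IsBernoulli μ pw) [IsProbabilityMeasure μ]
    (hpos : ∀ i, 0 < pw i) {α : Type*} (state : ℕ → (ℕ → Fin k) → α)
    (hstate : ∀ m, DependsOn (state m) (Iio m)) (len : α → ℕ) (word : α → ℕ → Fin k)
    {N : ℕ} (hN : ∀ a, len a ≤ N) :
    ∀ᵐ ω ∂μ, ∃ m, ∀ i < len (state m ω), ω (m + i) = word (state m ω) i := by
  have : Nonempty (Fin k) := ⟨(nonempty_of_isProbabilityMeasure μ).some 0⟩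
  set pmin := Finset.univ.inf pw
  have hpmin_pos : 0 < pmin := (Finset.lt_inf_iff ENNReal.zero_lt_top).2 fun i _ => hpos i
  have hpmin_le_one : pmin ≤ 1 :=
    (Finset.inf_le (Finset.mem_univ (Classical.arbitrary _))).trans (hμ.weight_le_one _)
  have hword : ∀ a, pmin ^ N ≤ ∏ i : Fin (len a), pw (word a i) := fun a =>
    calc pmin ^ N ≤ pmin ^ len a := pow_le_pow_right_of_le_one' hpmin_le_one (hN a)
      _ = ∏ _i : Fin (len a), pmin := by simp
      _ ≤ _ := Finset.prod_le_prod' fun i _ => Finset.inf_le (Finset.mem_univ _)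
  refine (hμ.ae_exists_mem (pow_ne_zero N hpmin_pos.ne') (N := N)
    (fun j => {ω | ∀ i < len (state (j * N) ω), ω (j * N + i) = word (state (j * N) ω) i})
    (fun j ω ω' h => ?_) (fun j v => ?_)).mono fun ω ⟨j, hj⟩ => ⟨j * N, hj⟩
  · have hs : state (j * N) ω = state (j * N) ω' :=
      hstate _ fun i hi => h i (by simp only [mem_Iio] at hi ⊢; omega)
    simp only [mem_ofPred_eq, hs]
    refine propext (forall₂_congr fun i hi => ?_)
    rw [h (j * N + i) (by simp only [mem_Iio]; have := hN (state (j * N) ω'); omega)]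
  · obtain ⟨ω₀, hω₀⟩ := prefixCylinder_nonempty v
    refine ⟨len (state (j * N) ω₀), fun i => word (state (j * N) ω₀) i, hword _,
      fun ω hω => ?_⟩
    obtain ⟨hωv, hωw⟩ := mem_prefixCylinder_append.1 hω
    simp only [mem_ofPred_eq, (hstate _).eq_of_mem_prefixCylinder hωv hω₀]
    exact fun i hi => hωw ⟨i, hi⟩

end IsBernoulli

end Bernoulli

theorem ae_isChain {X : Type*} [MetricSpace X] [CompactSpace X] {k : ℕ}
    {f : Fin k → X → X} (hf : ∀ i, Continuous (f i)) {δ : ℝ} (hδ : 0 < δ) (x y : X)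
    (hch : ∀ p, ∃ ω, isChain f δ ω p y)
    {μ : Measure (ℕ → Fin k)} [IsProbabilityMeasure μ]
    {pw : Fin k → ℝ≥0∞} (hμ : IsBernoulli μ pw) (hpos : ∀ i, 0 < pw i) :
    ∀ᵐ ω ∂μ, isChain f δ ω x y := by
  obtain ⟨N, hN⟩ := exists_bound_isChainOfLength hf hch
  choose word len hlen hlenN hchain using hN
  filter_upwards [hμ.ae_exists_follows hpos (fun m ω => ifsOrbit f x ω m)
    (dependsOn_ifsOrbit f x) len word hlenN] with ω ⟨m, hm⟩
  exact ⟨m + len _, by have := hlen (ifsOrbit f x ω m); omega,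
    (isChainOfLength_ifsOrbit hδ x ω m).append
      ((hchain _).congr_dir fun i hi => (hm i hi).symm)⟩

theorem stmt9_general {X : Type*} [MetricSpace X] [CompactSpace X] {k : ℕ}
    (f : Fin k → X ≃ₜ X)
    (hct : ∀ p q : X, ∀ δ : ℝ, 0 < δ →
      ∃ ω : ℕ → Fin k, isChain (fun i => ⇑(f i)) δ ω p q)
    (μ : Measure (ℕ → Fin k)) [IsProbabilityMeasure μ]
    (pw : Fin k → ℝ≥0∞) (hpos : ∀ i, 0 < pw i)
    (hcyl : ∀ (n : ℕ) (w : Fin n → Fin k),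
      μ {ω | ∀ i : Fin n, ω i = w i} = ∏ i, pw (w i)) :
    ∀ x : X, ∃ Ω : Set (ℕ → Fin k), μ Ω = 1 ∧
      ∀ ω ∈ Ω, ∀ y : X, ∀ δ : ℝ, 0 < δ → isChain (fun i => ⇑(f i)) δ ω x y := by
  intro x
  obtain ⟨D, hDc, hDd⟩ := TopologicalSpace.exists_countable_dense X
  have hD : ∀ᵐ ω ∂μ, ∀ y ∈ D, ∀ m : ℕ,
      isChain (fun i => ⇑(f i)) (1 / (m + 1)) ω x y := by
    refine (ae_ball_iff hDc).2 fun y _ => ae_all_iff.2 fun m => ?_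
    exact ae_isChain (fun i => (f i).continuous) Nat.one_div_pos_of_nat x y
      (fun p => hct p y _ Nat.one_div_pos_of_nat) hcyl hpos
  refine ⟨{ω | ∀ y ∈ D, ∀ m : ℕ, isChain (fun i => ⇑(f i)) (1 / (m + 1)) ω x y},
    by rw [measure_congr (ae_eq_univ.2 hD), measure_univ], fun ω hω y δ hδ => ?_⟩
  obtain ⟨m, hm⟩ := exists_nat_one_div_lt (half_pos hδ)
  obtain ⟨y', hy'D, hy'⟩ := hDd.exists_dist_lt y (half_pos hδ)
  exact isChain_of_add_dist_le (hω y' hy'D m) (by linarith)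

theorem stmt9 {X : Type*} [MetricSpace X] [CompactSpace X] {k : ℕ}
    (f : Fin k → X ≃ₜ X)
    (hct : ∀ p q : X, ∀ δ : ℝ, 0 < δ →
      ∃ ω : ℕ → Fin k, isChain (fun i => ⇑(f i)) δ ω p q)
    (μ : Measure (ℕ → Fin k)) [IsProbabilityMeasure μ]
    (pw : Fin k → ℝ≥0∞) (hpos : ∀ i, 0 < pw i) (hsum : ∑ i, pw i = 1)
    (hcyl : ∀ (n : ℕ) (w : Fin n → Fin k),
      μ {ω | ∀ i : Fin n, ω i = w i} = ∏ i, pw (w i)) :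
    ∀ x : X, ∃ Ω : Set (ℕ → Fin k), μ Ω = 1 ∧
      ∀ ω ∈ Ω, ∀ y : X, ∀ δ : ℝ, 0 < δ → isChain (fun i => ⇑(f i)) δ ω x y :=
  stmt9_general f hct μ pw hpos hcyl
end

section
/- Let X be a compact metric space and f₁,…,f_k continuous self-maps of X. Let Q ⊆ X and suppose that every point y ∈ X admits a finite word w with f_w(y) ∈ Q. Then for every x ∈ X the hitting set A(x) = { n ∈ ℕ : ∃ word w of length n with f_w(x) ∈ Q } is syndetic in ℕ. -/
/-- A set of naturals is syndetic if it has bounded gaps. -/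
def Syndetic (A : Set ℕ) : Prop :=
  ∃ N : ℕ, ∀ m : ℕ, ∃ a ∈ A, m ≤ a ∧ a ≤ m + N

/-- Apply the maps of an IFS along a finite word: `f_{w_n} ∘ ⋯ ∘ f_{w_1}`. -/
def applyWord {X : Type*} {k : ℕ} (f : Fin k → X → X) (w : List (Fin k)) (x : X) : X :=
  w.foldl (fun y i => f i y) x

/-! The sets `{y | f_w y ∈ Q}` are open and cover `X`, so by compactness finitely many words
suffice, and their maximal length `N` bounds the waiting time for `Q` from every point.
Walking `m` steps along any letter and then continuing with a word of length `≤ N`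
puts a hitting time in every window `[m, m + N]`. -/

section

variable {X : Type*} {k : ℕ} (f : Fin k → X → X)

lemma applyWord_append (v w : List (Fin k)) (x : X) :
    applyWord f (v ++ w) x = applyWord f w (applyWord f v x) :=
  List.foldl_append

lemma continuous_applyWord [TopologicalSpace X] (hf : ∀ i, Continuous (f i))
    (w : List (Fin k)) : Continuous (applyWord f w) := by
  induction w with
  | nil => exact continuous_id
  | cons i w ih => exact ih.comp (hf i)

lemma exists_word_length_bound_of_isOpen [TopologicalSpace X] [CompactSpace X]
    (hf : ∀ i, Continuous (f i)) {Q : Set X} (hQ : IsOpen Q)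
    (hcover : ∀ y, ∃ w : List (Fin k), applyWord f w y ∈ Q) :
    ∃ N, ∀ y, ∃ w : List (Fin k), w.length ≤ N ∧ applyWord f w y ∈ Q := by
  obtain ⟨t, ht⟩ := isCompact_univ.elim_finite_subcover (fun w => applyWord f w ⁻¹' Q)
    (fun w => hQ.preimage (continuous_applyWord f hf w))
    (fun y _ => Set.mem_iUnion.2 (hcover y))
  refine ⟨t.sup List.length, fun y => ?_⟩
  obtain ⟨w, hwt, hw⟩ := Set.mem_iUnion₂.1 (ht (Set.mem_univ y))
  exact ⟨w, Finset.le_sup hwt, hw⟩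

lemma syndetic_of_word_length_bound (i : Fin k) {Q : Set X} {N : ℕ}
    (hN : ∀ y, ∃ w : List (Fin k), w.length ≤ N ∧ applyWord f w y ∈ Q) (x : X) :
    Syndetic {n : ℕ | ∃ w : List (Fin k), w.length = n ∧ applyWord f w x ∈ Q} := by
  refine ⟨N, fun m => ?_⟩
  obtain ⟨w, hwN, hw⟩ := hN (applyWord f (List.replicate m i) x)
  refine ⟨m + w.length, ⟨List.replicate m i ++ w, by simp, ?_⟩, le_self_add,
    Nat.add_le_add_left hwN m⟩
  rwa [applyWord_append]

end

theorem stmt14 {X : Type*} [MetricSpace X] [CompactSpace X] {k : ℕ}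
    (f : Fin k → X → X) (hf : ∀ i, Continuous (f i))
    (Q : Set X) (hQ : IsOpen Q)
    (hcover : ∀ y : X, ∃ w : List (Fin k), w ≠ [] ∧ applyWord f w y ∈ Q) :
    ∀ x : X,
      Syndetic {n : ℕ | ∃ w : List (Fin k), w.length = n ∧ applyWord f w x ∈ Q} := by
  intro x
  obtain ⟨N, hN⟩ := exists_word_length_bound_of_isOpen f hf hQ
    fun y => (hcover y).imp fun _ => And.right
  obtain ⟨w, hw, -⟩ := hcover x
  obtain ⟨i, -⟩ := List.exists_mem_of_ne_nil w hw
  exact syndetic_of_word_length_bound f i hN x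
end
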